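/- Let Z = ∑_{j=1}^m ∏_{k≠j} X_k − p_1 s_1 and X = ∏_{j=1}^m X_j(X_j−1) − ∏_{j=1}^m X_j². Then E[Z X] = p_1² ∑_{j=1}^m ∏_{k≠j}(2+μ_k) − p_1 ∑_{j=1}^m (1+μ_j)∏_{k≠j}(1+3μ_k+μ_k²) − p_1² s_1( p_1 − ∏_{j=1}^m(1+μ_j) ). -/

import Mathlib

open MeasureTheory ProbabilityTheory Finset
open scoped NNReal

/-- The law of `m` independent Poisson random variables `X_j ~ Poisson (μ j)`,
as a product measure on `Fin m → ℕ`. -/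
noncomputable def poissonPi {m : ℕ} (μ : Fin m → ℝ≥0) : Measure (Fin m → ℕ) :=
  Measure.pi fun j => poissonMeasure (μ j)

/-!
Multiplying out, `Z X` is a linear combination of products `∏ⱼ fⱼ(Xⱼ)` whose factors are among
`n (n - 1)`, `n²`, `n² (n - 1)` and `n³`. By independence the expectation of such a product is the
product of the expectations, and each factor is a Poisson moment, read off from the factorial
moments `E[X (X - 1) ⋯ (X - k + 1)] = μᵏ` after writing the polynomial in the falling-factorial
basis.
-/

open Real in
theorem hasSum_poissonMeasure_descFactorial (r : ℝ≥0) (k : ℕ) :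
    HasSum (fun n ↦ exp (-r) * r ^ n / n.factorial * (n.descFactorial k : ℝ)) ((r : ℝ) ^ k) := by
  rw [← hasSum_nat_add_iff' k]
  have hlow : ∑ n ∈ range k, exp (-r) * r ^ n / n.factorial * (n.descFactorial k : ℝ) = 0 :=
    sum_eq_zero fun n hn ↦ by
      rw [Nat.descFactorial_eq_zero_iff_lt.2 (mem_range.1 hn), Nat.cast_zero, mul_zero]
  rw [hlow, sub_zero]
  have hshift : ∀ n : ℕ, exp (-r) * r ^ (n + k) / (n + k).factorial * ((n + k).descFactorial k : ℝ)
      = r ^ k * (exp (-r) * r ^ n / n.factorial) := fun n ↦ by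
    have hfac : (n.factorial : ℝ) * (n + k).descFactorial k = (n + k).factorial := by
      exact_mod_cast Nat.add_sub_cancel n k ▸ Nat.factorial_mul_descFactorial (Nat.le_add_left k n)
    rw [← hfac, pow_add]
    field_simp
  simpa only [hshift, mul_one] using (hasSum_one_poissonMeasure r).mul_left ((r : ℝ) ^ k)

theorem integrable_descFactorial_poissonMeasure (r : ℝ≥0) (k : ℕ) :
    Integrable (fun n : ℕ ↦ (n.descFactorial k : ℝ)) (poissonMeasure r) := by
  rw [integrable_poissonMeasure_iff]
  simpa only [Real.norm_natCast] using (hasSum_poissonMeasure_descFactorial r k).summable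

theorem integral_descFactorial_poissonMeasure (r : ℝ≥0) (k : ℕ) :
    ∫ n, (n.descFactorial k : ℝ) ∂(poissonMeasure r) = (r : ℝ) ^ k := by
  rw [integral_poissonMeasure]
  exact (hasSum_poissonMeasure_descFactorial r k).tsum_eq

theorem Nat.cast_descFactorial_three {S : Type*} [CommRing S] (n : ℕ) :
    (n.descFactorial 3 : S) = n * (n - 1) * (n - 2) := by
  rcases n with _ | _ | n <;> simp [Nat.descFactorial]
  ring

theorem Nat.cast_sq_eq_descFactorial {S : Type*} [CommRing S] (n : ℕ) :
    (n : S) ^ 2 = n.descFactorial 2 + n.descFactorial 1 := by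
  rw [Nat.cast_descFactorial_two, Nat.descFactorial_one]
  ring

theorem Nat.cast_sq_mul_sub_one_eq_descFactorial {S : Type*} [CommRing S] (n : ℕ) :
    (n : S) ^ 2 * (n - 1) = n.descFactorial 3 + 2 * n.descFactorial 2 := by
  rw [Nat.cast_descFactorial_three, Nat.cast_descFactorial_two]
  ring

theorem Nat.cast_pow_three_eq_descFactorial {S : Type*} [CommRing S] (n : ℕ) :
    (n : S) ^ 3 = n.descFactorial 3 + 3 * n.descFactorial 2 + n.descFactorial 1 := by
  rw [Nat.cast_descFactorial_three, Nat.cast_descFactorial_two, Nat.descFactorial_one]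
  ring

section PoissonMoments

variable (r : ℝ≥0)

attribute [local fun_prop] integrable_descFactorial_poissonMeasure

theorem integrable_mul_sub_one_poissonMeasure :
    Integrable (fun n : ℕ ↦ (n : ℝ) * (n - 1)) (poissonMeasure r) := by
  simp_rw [← Nat.cast_descFactorial_two]
  fun_prop

theorem integrable_sq_poissonMeasure :
    Integrable (fun n : ℕ ↦ (n : ℝ) ^ 2) (poissonMeasure r) := by
  simp_rw [Nat.cast_sq_eq_descFactorial]
  fun_prop

theorem integrable_sq_mul_sub_one_poissonMeasure :
    Integrable (fun n : ℕ ↦ (n : ℝ) ^ 2 * (n - 1)) (poissonMeasure r) := by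
  simp_rw [Nat.cast_sq_mul_sub_one_eq_descFactorial]
  fun_prop

theorem integrable_pow_three_poissonMeasure :
    Integrable (fun n : ℕ ↦ (n : ℝ) ^ 3) (poissonMeasure r) := by
  simp_rw [Nat.cast_pow_three_eq_descFactorial]
  fun_prop

theorem integral_mul_sub_one_poissonMeasure :
    ∫ n : ℕ, (n : ℝ) * (n - 1) ∂(poissonMeasure r) = (r : ℝ) ^ 2 := by
  simp_rw [← Nat.cast_descFactorial_two, integral_descFactorial_poissonMeasure]

theorem integral_sq_poissonMeasure :
    ∫ n : ℕ, (n : ℝ) ^ 2 ∂(poissonMeasure r) = r * (1 + (r : ℝ)) := by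
  simp_rw [Nat.cast_sq_eq_descFactorial]
  rw [integral_add (by fun_prop) (by fun_prop)]
  simp only [integral_descFactorial_poissonMeasure]
  ring

theorem integral_sq_mul_sub_one_poissonMeasure :
    ∫ n : ℕ, (n : ℝ) ^ 2 * (n - 1) ∂(poissonMeasure r) = (r : ℝ) ^ 2 * (2 + r) := by
  simp_rw [Nat.cast_sq_mul_sub_one_eq_descFactorial]
  rw [integral_add (by fun_prop) (by fun_prop), integral_const_mul]
  simp only [integral_descFactorial_poissonMeasure]
  ring

theorem integral_pow_three_poissonMeasure :
    ∫ n : ℕ, (n : ℝ) ^ 3 ∂(poissonMeasure r) = r * (1 + 3 * r + (r : ℝ) ^ 2) := by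
  simp_rw [Nat.cast_pow_three_eq_descFactorial]
  rw [integral_add (by fun_prop) (by fun_prop), integral_add (by fun_prop) (by fun_prop),
    integral_const_mul]
  simp only [integral_descFactorial_poissonMeasure]
  ring

end PoissonMoments

theorem Finset.prod_ite_eq_mul_prod_erase {ι M : Type*} [DecidableEq ι] [CommMonoid M]
    {s : Finset ι} {j : ι} (h : j ∈ s) (a b : ι → M) :
    ∏ l ∈ s, (if l = j then a l else b l) = a j * ∏ l ∈ s.erase j, b l := by
  rw [← mul_prod_erase s _ h, if_pos rfl]
  congr 1
  exact prod_congr rfl fun l hl ↦ if_neg (ne_of_mem_erase hl)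

theorem Finset.prod_mul_prod_erase {ι M : Type*} [DecidableEq ι] [CommMonoid M]
    {s : Finset ι} {j : ι} (h : j ∈ s) (f g : ι → M) :
    (∏ k ∈ s, f k) * ∏ k ∈ s.erase j, g k = f j * ∏ k ∈ s.erase j, f k * g k := by
  rw [← mul_prod_erase s f h, prod_mul_distrib, mul_assoc]

theorem sum_prod_erase_sub_mul_prod_sub_prod {ι R : Type*} [Fintype ι] [DecidableEq ι]
    [CommRing R] (y : ι → R) (c : R) :
    (∑ j, ∏ k ∈ univ.erase j, y k - c) * (∏ j, y j * (y j - 1) - ∏ j, y j ^ 2)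
      = ∑ j, (y j * (y j - 1) * ∏ k ∈ univ.erase j, y k ^ 2 * (y k - 1)
          - y j ^ 2 * ∏ k ∈ univ.erase j, y k ^ 3)
        - c * (∏ j, y j * (y j - 1) - ∏ j, y j ^ 2) := by
  rw [sub_mul, sum_mul]
  congr 1
  refine sum_congr rfl fun j _ ↦ ?_
  rw [mul_sub, mul_comm (∏ k ∈ univ.erase j, y k), mul_comm (∏ k ∈ univ.erase j, y k),
    prod_mul_prod_erase (mem_univ j), prod_mul_prod_erase (mem_univ j)]
  congr 2 <;> refine prod_congr rfl fun k _ ↦ ?_ <;> ring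

section Pi

variable {ι 𝕜 E : Type*} [Fintype ι] [DecidableEq ι] [RCLike 𝕜] [MeasurableSpace E]
  {ν : ι → Measure E} [∀ i, SigmaFinite (ν i)] (j : ι)

theorem integral_mul_prod_erase_pi (f g : E → 𝕜) :
    ∫ x, f (x j) * ∏ k ∈ univ.erase j, g (x k) ∂(Measure.pi ν)
      = (∫ y, f y ∂(ν j)) * ∏ k ∈ univ.erase j, ∫ y, g y ∂(ν k) := by
  have key := integral_fintype_prod_eq_prod (μ := ν) fun l ↦ if l = j then f else g
  have integral_apply_ite (l : ι) : ∫ y, (if l = j then f else g) y ∂(ν l)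
      = if l = j then ∫ y, f y ∂(ν l) else ∫ y, g y ∂(ν l) := by
    split_ifs <;> rfl
  simp only [integral_apply_ite] at key
  simpa only [ite_apply, prod_ite_eq_mul_prod_erase (mem_univ j)] using key

theorem MeasureTheory.Integrable.mul_prod_erase_pi {f g : E → 𝕜} (hf : Integrable f (ν j))
    (hg : ∀ k ≠ j, Integrable g (ν k)) :
    Integrable (fun x ↦ f (x j) * ∏ k ∈ univ.erase j, g (x k)) (Measure.pi ν) := by
  have key := Integrable.fintype_prod (μ := ν) (f := fun l ↦ if l = j then f else g)
    fun l ↦ by split_ifs with h; exacts [h ▸ hf, hg l h]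
  simpa only [ite_apply, prod_ite_eq_mul_prod_erase (mem_univ j)] using key

end Pi

section PoissonPi

variable {m : ℕ} (μ : Fin m → ℝ≥0) (j : Fin m)

theorem integrable_mul_sub_one_mul_prod_erase_poissonPi :
    Integrable (fun x ↦ (x j : ℝ) * (x j - 1) * ∏ k ∈ univ.erase j, (x k : ℝ) ^ 2 * (x k - 1))
      (poissonPi μ) :=
  .mul_prod_erase_pi j (integrable_mul_sub_one_poissonMeasure _)
    fun _ _ ↦ integrable_sq_mul_sub_one_poissonMeasure _

theorem integrable_sq_mul_prod_erase_poissonPi :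
    Integrable (fun x ↦ (x j : ℝ) ^ 2 * ∏ k ∈ univ.erase j, (x k : ℝ) ^ 3) (poissonPi μ) :=
  .mul_prod_erase_pi j (integrable_sq_poissonMeasure _)
    fun _ _ ↦ integrable_pow_three_poissonMeasure _

theorem integrable_prod_mul_sub_one_poissonPi :
    Integrable (fun x ↦ ∏ k, (x k : ℝ) * (x k - 1)) (poissonPi μ) :=
  .fintype_prod fun _ ↦ integrable_mul_sub_one_poissonMeasure _

theorem integrable_prod_sq_poissonPi :
    Integrable (fun x ↦ ∏ k, (x k : ℝ) ^ 2) (poissonPi μ) :=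
  .fintype_prod fun _ ↦ integrable_sq_poissonMeasure _

theorem integral_mul_sub_one_mul_prod_erase_poissonPi :
    ∫ x, (x j : ℝ) * (x j - 1) * ∏ k ∈ univ.erase j, (x k : ℝ) ^ 2 * (x k - 1) ∂(poissonPi μ)
      = (∏ k, (μ k : ℝ)) ^ 2 * ∏ k ∈ univ.erase j, (2 + (μ k : ℝ)) := by
  rw [poissonPi, integral_mul_prod_erase_pi j (fun n : ℕ ↦ (n : ℝ) * (n - 1))
    fun n : ℕ ↦ (n : ℝ) ^ 2 * (n - 1)]
  simp only [integral_mul_sub_one_poissonMeasure, integral_sq_mul_sub_one_poissonMeasure]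
  rw [← prod_pow, prod_mul_prod_erase (mem_univ j)]

theorem integral_sq_mul_prod_erase_poissonPi :
    ∫ x, (x j : ℝ) ^ 2 * ∏ k ∈ univ.erase j, (x k : ℝ) ^ 3 ∂(poissonPi μ)
      = (∏ k, (μ k : ℝ)) * ((1 + μ j) * ∏ k ∈ univ.erase j, (1 + 3 * (μ k : ℝ) + μ k ^ 2)) := by
  rw [poissonPi, integral_mul_prod_erase_pi j (fun n : ℕ ↦ (n : ℝ) ^ 2) fun n : ℕ ↦ (n : ℝ) ^ 3]
  simp only [integral_sq_poissonMeasure, integral_pow_three_poissonMeasure]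
  linear_combination (-1 - (μ j : ℝ)) * prod_mul_prod_erase (mem_univ j) (fun k ↦ (μ k : ℝ))
    fun k ↦ 1 + 3 * (μ k : ℝ) + μ k ^ 2

theorem integral_prod_mul_sub_one_poissonPi :
    ∫ x, ∏ k, (x k : ℝ) * (x k - 1) ∂(poissonPi μ) = (∏ k, (μ k : ℝ)) ^ 2 := by
  rw [poissonPi, integral_fintype_prod_eq_prod fun _ (n : ℕ) ↦ (n : ℝ) * (n - 1)]
  simp only [integral_mul_sub_one_poissonMeasure, prod_pow]

theorem integral_prod_sq_poissonPi :
    ∫ x, ∏ k, (x k : ℝ) ^ 2 ∂(poissonPi μ) = (∏ k, (μ k : ℝ)) * ∏ k, (1 + (μ k : ℝ)) := by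
  rw [poissonPi, integral_fintype_prod_eq_prod fun _ (n : ℕ) ↦ (n : ℝ) ^ 2]
  simp only [integral_sq_poissonMeasure, prod_mul_distrib]

end PoissonPi

theorem expectation_Z_X_general (m : ℕ) (μ : Fin m → ℝ≥0) :
    ∫ x : Fin m → ℕ, (∑ j, (∏ k ∈ univ.erase j, (x k : ℝ)) - (∏ j, (μ j : ℝ)) * ∑ j, ((μ j : ℝ))⁻¹) * (∏ j, ((x j : ℝ) * ((x j : ℝ) - 1)) - ∏ j, (x j : ℝ) ^ 2) ∂(poissonPi μ)
      = (∏ j, (μ j : ℝ)) ^ 2 * ∑ j, ∏ k ∈ univ.erase j, (2 + (μ k : ℝ)) - (∏ j, (μ j : ℝ)) * ∑ j, (1 + (μ j : ℝ)) * ∏ k ∈ univ.erase j, (1 + 3 * (μ k : ℝ) + (μ k : ℝ) ^ 2) - (∏ j, (μ j : ℝ)) ^ 2 * (∑ j, ((μ j : ℝ))⁻¹) * ((∏ j, (μ j : ℝ)) - ∏ j, (1 + (μ j : ℝ))) := by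
  simp_rw [sum_prod_erase_sub_mul_prod_sub_prod]
  have hA := integrable_mul_sub_one_mul_prod_erase_poissonPi μ
  have hB := integrable_sq_mul_prod_erase_poissonPi μ
  have hC := integrable_prod_mul_sub_one_poissonPi μ
  have hD := integrable_prod_sq_poissonPi μ
  rw [integral_sub (integrable_finsetSum _ fun j _ ↦ (hA j).sub' (hB j)) ((hC.sub' hD).const_mul _),
    integral_finsetSum _ fun j _ ↦ (hA j).sub' (hB j), integral_const_mul, integral_sub hC hD]
  simp only [integral_sub (hA _) (hB _), integral_mul_sub_one_mul_prod_erase_poissonPi,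
    integral_sq_mul_prod_erase_poissonPi, integral_prod_mul_sub_one_poissonPi,
    integral_prod_sq_poissonPi, sum_sub_distrib, ← mul_sum]
  ring

theorem expectation_Z_X (m : ℕ) (hm : 2 ≤ m) (μ : Fin m → ℝ≥0) (hμ : ∀ j, 0 < μ j) :
    ∫ x : Fin m → ℕ, (∑ j, (∏ k ∈ univ.erase j, (x k : ℝ)) - (∏ j, (μ j : ℝ)) * ∑ j, ((μ j : ℝ))⁻¹) * (∏ j, ((x j : ℝ) * ((x j : ℝ) - 1)) - ∏ j, (x j : ℝ) ^ 2) ∂(poissonPi μ)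
      = (∏ j, (μ j : ℝ)) ^ 2 * ∑ j, ∏ k ∈ univ.erase j, (2 + (μ k : ℝ)) - (∏ j, (μ j : ℝ)) * ∑ j, (1 + (μ j : ℝ)) * ∏ k ∈ univ.erase j, (1 + 3 * (μ k : ℝ) + (μ k : ℝ) ^ 2) - (∏ j, (μ j : ℝ)) ^ 2 * (∑ j, ((μ j : ℝ))⁻¹) * ((∏ j, (μ j : ℝ)) - ∏ j, (1 + (μ j : ℝ))) :=
  expectation_Z_X_general m μ
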